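/- On (0, e^{-√2}), the function F(ρ) = log³ρ/3 - log²ρ/2 - 2 log ρ - 4 log( -log ρ/(log²ρ + 2log ρ + 2) ) - 2/log²ρ has derivative F'(ρ) = (2 - log²ρ)²(log ρ + 1)(log²ρ + 2)/(ρ log³ρ (log²ρ + 2 log ρ + 2)). -/

import Mathlib

/-!
Writing `F = G ∘ log`, the chain rule reduces the claim to the derivative of the rational-logarithmic
function `G(t) = t³/3 - t²/2 - 2t - 4 log(-t/(t² + 2t + 2)) - 2/t²` at `t = log ρ < 0`. Since
`t² + 2t + 2 = (t + 1)² + 1` never vanishes, `G` is differentiable at every `t ≠ 0`, and its derivative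
`t² - t - 2 - 4(1/t - (2t + 2)/(t² + 2t + 2)) + 4/t³` factors as
`(2 - t²)²(t + 1)(t² + 2)/(t³(t² + 2t + 2))`.
-/

open Real

lemma sq_add_two_mul_add_two_pos (t : ℝ) : 0 < t ^ 2 + 2 * t + 2 := by
  nlinarith [sq_nonneg (t + 1)]

lemma hasDerivAt_log_neg_div_sq_add_two_mul_add_two {t : ℝ} (ht : t ≠ 0) :
    HasDerivAt (fun s => log (-s / (s ^ 2 + 2 * s + 2)))
      (1 / t - (2 * t + 2) / (t ^ 2 + 2 * t + 2)) t := by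
  have hq := (sq_add_two_mul_add_two_pos t).ne'
  have hquot : HasDerivAt (fun s => -s / (s ^ 2 + 2 * s + 2))
      ((-1 * (t ^ 2 + 2 * t + 2) - -t * (2 * t + 2)) / (t ^ 2 + 2 * t + 2) ^ 2) t := by
    refine (hasDerivAt_neg t).div ?_ hq
    simpa using ((hasDerivAt_pow 2 t).add ((hasDerivAt_id t).const_mul 2)).add_const 2
  refine (hquot.log (div_ne_zero (neg_ne_zero.mpr ht) hq)).congr_deriv ?_
  -- `field_simp` looks for the denominator in its own normal form
  have hq' : t * (t + 2) + 2 ≠ 0 := by linarith [sq_add_two_mul_add_two_pos t]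
  field_simp
  ring

lemma cusp_primitive_deriv_factor {t : ℝ} (ht : t ≠ 0) :
    t ^ 2 - t - 2 - 4 * (1 / t - (2 * t + 2) / (t ^ 2 + 2 * t + 2)) + 4 / t ^ 3 =
      (2 - t ^ 2) ^ 2 * (t + 1) * (t ^ 2 + 2) / (t ^ 3 * (t ^ 2 + 2 * t + 2)) := by
  have hq : t * (t + 2) + 2 ≠ 0 := by linarith [sq_add_two_mul_add_two_pos t]
  field_simp
  ring

lemma hasDerivAt_cusp_primitive {t : ℝ} (ht : t ≠ 0) :
    HasDerivAt (fun s => s ^ 3 / 3 - s ^ 2 / 2 - 2 * s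
        - 4 * log (-s / (s ^ 2 + 2 * s + 2)) - 2 / s ^ 2)
      ((2 - t ^ 2) ^ 2 * (t + 1) * (t ^ 2 + 2) / (t ^ 3 * (t ^ 2 + 2 * t + 2))) t := by
  have hinv : HasDerivAt (fun s => 2 / s ^ 2) (-(4 / t ^ 3)) t := by
    refine ((hasDerivAt_const t (2 : ℝ)).div (hasDerivAt_pow 2 t) (pow_ne_zero 2 ht))
      |>.congr_deriv ?_
    field_simp
    ring
  have hpoly := (((hasDerivAt_pow 3 t).div_const 3).sub ((hasDerivAt_pow 2 t).div_const 2)).sub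
    ((hasDerivAt_id t).const_mul 2)
  refine ((hpoly.sub ((hasDerivAt_log_neg_div_sq_add_two_mul_add_two ht).const_mul 4)).sub hinv)
    |>.congr_deriv ?_
  rw [← cusp_primitive_deriv_factor ht]
  push_cast
  ring

/-- The antiderivative identity for the volume enclosed by the Epstein surface
of the cusp metric: on `(0, e^{-√2})`, the function
`F(ρ) = log³ρ/3 - log²ρ/2 - 2 log ρ - 4 log(-log ρ/(log²ρ + 2log ρ + 2)) - 2/log²ρ`
has derivative
`F'(ρ) = (2 - log²ρ)²(log ρ + 1)(log²ρ + 2)/(ρ log³ρ (log²ρ + 2 log ρ + 2))`. -/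
theorem hasDerivAt_cusp_volume_antiderivative
    (ρ : ℝ) (h0 : 0 < ρ) (h1 : ρ < Real.exp (-Real.sqrt 2)) :
    HasDerivAt (fun x : ℝ =>
        (Real.log x)^3 / 3 - (Real.log x)^2 / 2 - 2 * Real.log x
          - 4 * Real.log (-(Real.log x) / ((Real.log x)^2 + 2 * Real.log x + 2))
          - 2 / (Real.log x)^2)
      ((2 - (Real.log ρ)^2)^2 * (Real.log ρ + 1) * ((Real.log ρ)^2 + 2) /
        (ρ * (Real.log ρ)^3 * ((Real.log ρ)^2 + 2 * Real.log ρ + 2))) ρ := by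
  have hlog_neg : log ρ < 0 :=
    (log_lt_log h0 h1).trans_le (by rw [log_exp]; exact neg_nonpos.mpr (sqrt_nonneg 2))
  refine ((hasDerivAt_cusp_primitive hlog_neg.ne).comp ρ (hasDerivAt_log h0.ne')).congr_deriv ?_
  field_simp
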